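/- arXiv:1605.00254 — 10 statements merged into one kernel-verified Lean document; each statement's English description precedes it below -/
import Mathlib

section
/- Let G be a group and ω a normalized 3-cocycle on G with multiplicative phase θ. Then for all g, x, y, z ∈ G: θ_g(x,y)·θ_g(xy,z) = θ_g(x,yz)·θ_{x⁻¹gx}(y,z). -/
/-- The multiplicative phase `θ_g(x,y)` of a 3-cocycle `ω`. -/
noncomputable def theta {G : Type*} [Group G] (ω : G → G → G → ℂ) (g x y : G) : ℂ :=
  ω g x y * ω x y ((x * y)⁻¹ * g * (x * y)) / ω x (x⁻¹ * g * x) y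

/-!
Write `g^x = x⁻¹gx`. The quotient of the two sides is the cocycle relation at `(g, x, y, z)`
times the one at `(x, y, g^{xy}, z)`, divided by those at `(x, g^x, y, z)` and
`(x, y, z, g^{xyz})`: the four values `ω(x,y,z)`, `ω(gx,y,z)`, `ω(x, y g^{xy}, z)` and
`ω(x, y, z g^{xyz})` that occur in these relations but not in the identity cancel, once
`x g^x = g x` is used to match their arguments.
-/

section Conjugation

variable {G : Type*} [Group G]

theorem conj_mul_conj (g x y : G) : (x * y)⁻¹ * g * (x * y) = y⁻¹ * (x⁻¹ * g * x) * y := by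
  group

theorem mul_conj (g x : G) : x * (x⁻¹ * g * x) = g * x := by
  group

end Conjugation

theorem theta_mul_theta_of_ne_zero {G : Type*} [Group G] (ω : G → G → G → ℂ)
    (hcoc : ∀ a b c d : G,
      ω a b c * ω a (b * c) d * ω b c d = ω (a * b) c d * ω a b (c * d))
    (hne : ∀ a b c : G, ω a b c ≠ 0) (g x y z : G) :
    theta ω g x y * theta ω g (x * y) z
      = theta ω g x (y * z) * theta ω (x⁻¹ * g * x) y z := by
  simp only [theta, conj_mul_conj]
  set h := x⁻¹ * g * x
  set k := y⁻¹ * h * y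
  set l := z⁻¹ * k * z
  have hA := hcoc g x y z
  have hB := hcoc x h y z
  have hC := hcoc x y k z
  have hD := hcoc x y z l
  rw [mul_conj, ← mul_conj h y] at hB
  rw [← mul_conj k z] at hC
  field_simp [hne]
  refine mul_right_cancel₀
    (b := ω x y z * ω (g * x) y z * ω x (y * k) z * ω x y (z * l)) (by simp [hne]) ?_
  have hprod := congrArg₂ (· * ·) (congrArg₂ (· * ·) hA hC) (congrArg₂ (· * ·) hB hD).symm
  linear_combination hprod

theorem theta_assoc_general {G : Type*} [Group G] (ω : G → G → G → ℂ)
    (habs : ∀ a b c : G, ‖ω a b c‖ = 1)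
    (hcoc : ∀ a b c d : G,
      ω a b c * ω a (b * c) d * ω b c d = ω (a * b) c d * ω a b (c * d)) :
    ∀ g x y z : G,
      theta ω g x y * theta ω g (x * y) z
        = theta ω g x (y * z) * theta ω (x⁻¹ * g * x) y z :=
  theta_mul_theta_of_ne_zero ω hcoc fun a b c h ↦ by simpa [h] using habs a b c

/-- For a normalized 3-cocycle `ω` on `G` with multiplicative phase `θ`, we have
`θ_g(x,y)·θ_g(xy,z) = θ_g(x,yz)·θ_{x⁻¹gx}(y,z)` for all `g, x, y, z ∈ G`. -/
theorem theta_assoc {G : Type*} [Group G] (ω : G → G → G → ℂ)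
    (habs : ∀ a b c : G, ‖ω a b c‖ = 1)
    (hcoc : ∀ a b c d : G,
      ω a b c * ω a (b * c) d * ω b c d = ω (a * b) c d * ω a b (c * d))
    (hnorm : ∀ g h : G, ω g 1 h = 1) :
    ∀ g x y z : G,
      theta ω g x y * theta ω g (x * y) z
        = theta ω g x (y * z) * theta ω (x⁻¹ * g * x) y z :=
  theta_assoc_general ω habs hcoc
end

section
/- Let G be a group and ω a normalized 3-cocycle on G with multiplicative phase θ and comultiplicative phase γ. Then for all g, h, x, y ∈ G: θ_g(x,y)·θ_h(x,y)·γ_x(g,h)·γ_y(x⁻¹gx, x⁻¹hx) = θ_{gh}(x,y)·γ_{xy}(g,h). -/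
/-- The comultiplicative phase `γ_x(g,h)` of a 3-cocycle `ω`. -/
noncomputable def gammaPh {G : Type*} [Group G] (ω : G → G → G → ℂ) (x g h : G) : ℂ :=
  ω g h x * ω x (x⁻¹ * g * x) (x⁻¹ * h * x) / ω g x (x⁻¹ * h * x)

section

variable {G : Type*} [Group G]

noncomputable def coboundary (ω : G → G → G → ℂ) (a b c d : G) : ℂ :=
  ω a b c * ω a (b * c) d * ω b c d / (ω (a * b) c d * ω a b (c * d))

theorem coboundary_eq_one {ω : G → G → G → ℂ} (hω : ∀ a b c, ω a b c ≠ 0)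
    (hcoc : ∀ a b c d : G,
      ω a b c * ω a (b * c) d * ω b c d = ω (a * b) c d * ω a b (c * d)) (a b c d : G) :
    coboundary ω a b c d = 1 := by
  rw [coboundary, hcoc, div_self (mul_ne_zero (hω _ _ _) (hω _ _ _))]

theorem theta_mul_theta_mul_gammaPh_mul_gammaPh {ω : G → G → G → ℂ}
    (hω : ∀ a b c, ω a b c ≠ 0) (g h x y : G) :
    theta ω g x y * theta ω h x y * gammaPh ω x g h * gammaPh ω y (x⁻¹ * g * x) (x⁻¹ * h * x)
        * (coboundary ω g x (x⁻¹ * h * x) y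
          * coboundary ω x (x⁻¹ * g * x) y ((x * y)⁻¹ * h * (x * y)))
      = theta ω (g * h) x y * gammaPh ω (x * y) g h
        * (coboundary ω g h x y * coboundary ω g x y ((x * y)⁻¹ * h * (x * y))
          * coboundary ω x (x⁻¹ * g * x) (x⁻¹ * h * x) y
          * coboundary ω x y ((x * y)⁻¹ * g * (x * y)) ((x * y)⁻¹ * h * (x * y))) := by
  simp only [theta, gammaPh, coboundary, mul_assoc, mul_inv_rev, mul_inv_cancel_left]
  field_simp [hω]

end

theorem theta_gamma_compat_general {G : Type*} [Group G] (ω : G → G → G → ℂ)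
    (habs : ∀ a b c : G, ‖ω a b c‖ = 1)
    (hcoc : ∀ a b c d : G,
      ω a b c * ω a (b * c) d * ω b c d = ω (a * b) c d * ω a b (c * d)) :
    ∀ g h x y : G,
      theta ω g x y * theta ω h x y * gammaPh ω x g h
          * gammaPh ω y (x⁻¹ * g * x) (x⁻¹ * h * x)
        = theta ω (g * h) x y * gammaPh ω (x * y) g h := by
  intro g h x y
  have hω : ∀ a b c, ω a b c ≠ 0 := fun a b c => norm_ne_zero_iff.mp (by simp [habs])
  simpa only [coboundary_eq_one hω hcoc, mul_one] using
    theta_mul_theta_mul_gammaPh_mul_gammaPh hω g h x y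

/-- For a normalized 3-cocycle `ω` on `G` with multiplicative phase `θ` and comultiplicative
phase `γ`, we have
`θ_g(x,y)·θ_h(x,y)·γ_x(g,h)·γ_y(x⁻¹gx, x⁻¹hx) = θ_{gh}(x,y)·γ_{xy}(g,h)`. -/
theorem theta_gamma_compat {G : Type*} [Group G] (ω : G → G → G → ℂ)
    (habs : ∀ a b c : G, ‖ω a b c‖ = 1)
    (hcoc : ∀ a b c d : G,
      ω a b c * ω a (b * c) d * ω b c d = ω (a * b) c d * ω a b (c * d))
    (hnorm : ∀ g h : G, ω g 1 h = 1) :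
    ∀ g h x y : G,
      theta ω g x y * theta ω h x y * gammaPh ω x g h
          * gammaPh ω y (x⁻¹ * g * x) (x⁻¹ * h * x)
        = theta ω (g * h) x y * gammaPh ω (x * y) g h :=
  theta_gamma_compat_general ω habs hcoc
end

section
/- Let k be a field and G, H groups. For every bialgebra homomorphism f from the group Hopf algebra k[G] to the group Hopf algebra k[H] there exists a group homomorphism φ : G → H such that f(g) = φ(g) for all g ∈ G, where group elements are identified with their canonical images in the group algebras. -/
open TensorProduct

/-- The comultiplication of the group Hopf algebra `k[G]`, the algebra map determined by
`g ↦ g ⊗ g`. -/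
noncomputable def groupComul (k : Type*) [Field k] (G : Type*) [Group G] :
    MonoidAlgebra k G →ₐ[k] MonoidAlgebra k G ⊗[k] MonoidAlgebra k G :=
  MonoidAlgebra.lift k _ G
    { toFun := fun g => MonoidAlgebra.of k G g ⊗ₜ[k] MonoidAlgebra.of k G g
      map_one' := by simp [Algebra.TensorProduct.one_def, ← MonoidAlgebra.one_def]
      map_mul' := fun g h => by
        simp [Algebra.TensorProduct.tmul_mul_tmul] }

/-- The counit of the group Hopf algebra `k[G]`, the algebra map determined by `g ↦ 1`. -/
noncomputable def groupCounit (k : Type*) [Field k] (G : Type*) [Group G] :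
    MonoidAlgebra k G →ₐ[k] k :=
  MonoidAlgebra.lift k k G 1

/-!
The maps `groupComul` and `groupCounit` are the comultiplication and counit of the standard
bialgebra structure on `k[G]`, so `f` is a bialgebra homomorphism. It therefore sends the
group-like element `g` to a group-like element of `k[H]`, and over a field these are exactly the
elements of `H` (group-like elements are linearly independent). Multiplicativity of `f` makes
`g ↦ φ g` a group homomorphism.
-/

theorem groupComul_eq_comulAlgHom (k : Type*) [Field k] (G : Type*) [Group G] :
    groupComul k G = Bialgebra.comulAlgHom k (MonoidAlgebra k G) := by
  ext
  simp [groupComul]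

theorem groupCounit_eq_counitAlgHom (k : Type*) [Field k] (G : Type*) [Group G] :
    groupCounit k G = Bialgebra.counitAlgHom k (MonoidAlgebra k G) := by
  ext
  simp [groupCounit]

/-- Every bialgebra homomorphism `k[G] → k[H]` of group Hopf algebras comes from a group
homomorphism `φ : G → H`, i.e. `f(g) = φ(g)` for all `g ∈ G` (identifying group elements
with their canonical images in the group algebras). -/
theorem bialgHom_groupAlgebra_eq_monoidHom {k : Type*} [Field k]
    {G H : Type*} [Group G] [Group H]
    (f : MonoidAlgebra k G →ₐ[k] MonoidAlgebra k H)
    (hcomul : ∀ a : MonoidAlgebra k G,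
      groupComul k H (f a) = Algebra.TensorProduct.map f f (groupComul k G a))
    (hcounit : ∀ a : MonoidAlgebra k G, groupCounit k H (f a) = groupCounit k G a) :
    ∃ φ : G →* H, ∀ g : G,
      f (MonoidAlgebra.of k G g) = MonoidAlgebra.of k H (φ g) := by
  let F : MonoidAlgebra k G →ₐc[k] MonoidAlgebra k H :=
    .ofAlgHom f
      (AlgHom.ext fun a => by simpa [groupCounit_eq_counitAlgHom] using hcounit a)
      (AlgHom.ext fun a => by simpa [groupComul_eq_comulAlgHom] using (hcomul a).symm)
  exact ⟨MonoidAlgebra.mapDomainOfBialgHom F, fun g =>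
    (MonoidAlgebra.single_mapDomainOfBialgHom F g 1).symm⟩
end

section
/- Let A and B be finite abelian groups and p : A × B → ℂ satisfy the unitality, counitality, multiplicativity, comultiplicativity, and nondegeneracy conditions. Then |A| = |B|, p(a,1) = 1/|A| and p(1,b) = 1/|A| for all a ∈ A, b ∈ B, and |p(a,b)| = 1/|A| for all a ∈ A, b ∈ B. -/
/-! Multiplicativity says that the functions `p x : B → ℂ` are pairwise orthogonal nonzero
idempotents for the convolution `(f ⋆ g) b = ∑ t, f (b t⁻¹) g t`, so they are linearly
independent and `|A| ≤ |B|`; comultiplicativity says the same of the transposed family, so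
`|A| = |B|` and the `p x` form a basis of `B → ℂ`. Convolving `p x` with a point mass then shows
that every right translate of `p x` is a multiple of `p x`, i.e. `p x = p x 1 • χ` for a
character `χ` of `B`. Idempotence at `1` reads `|B| (p x 1)² = p x 1`, and characters of finite
groups have norm `1`. -/

open Finset

section FunctionalEquation

variable {G K : Type*} [Group G] {f : G → K}

lemma apply_one_ne_zero_of_apply_mul_mul_apply_one [MulZeroClass K] [NoZeroDivisors K]
    (hf : ∀ b c, f (b * c) * f 1 = f b * f c) (hne : f ≠ 0) : f 1 ≠ 0 := by
  obtain ⟨b, hb⟩ := Function.ne_iff.mp hne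
  intro h1
  exact hb (by simpa [h1] using hf b b)

def monoidHomOfApplyMulMulApplyOne [Field K] (hf : ∀ b c, f (b * c) * f 1 = f b * f c)
    (h1 : f 1 ≠ 0) : G →* K where
  toFun b := f b / f 1
  map_one' := div_self h1
  map_mul' b c := by
    field_simp
    rw [hf]

lemma norm_apply_eq_norm_apply_one [NormedField K] [Finite G]
    (hf : ∀ b c, f (b * c) * f 1 = f b * f c) (hne : f ≠ 0) (b : G) :
    ‖f b‖ = ‖f 1‖ := by
  have h1 := apply_one_ne_zero_of_apply_mul_mul_apply_one hf hne
  have := ((monoidHomOfApplyMulMulApplyOne hf h1).isOfFinOrder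
    (isOfFinOrder_of_finite b)).norm_eq_one
  rw [monoidHomOfApplyMulMulApplyOne, MonoidHom.coe_mk, OneHom.coe_mk, norm_div] at this
  exact (div_eq_one_iff_eq (norm_ne_zero_iff.mpr h1)).mp this

end FunctionalEquation

def ConvOrthogonalIdempotents {ι G K : Type*} [DecidableEq ι] [Group G] [Fintype G] [Semiring K]
    (p : ι → G → K) : Prop :=
  ∀ x y b, ∑ t, p x (b * t⁻¹) * p y t = if x = y then p x b else 0

namespace ConvOrthogonalIdempotents

variable {ι G K : Type*} [Fintype ι] [DecidableEq ι] [Group G] [Fintype G]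

lemma sum_mul_sum_smul_apply [CommSemiring K] {p : ι → G → K}
    (hp : ConvOrthogonalIdempotents p) (c : ι → K) (x : ι) (b : G) :
    ∑ t, p x (b * t⁻¹) * (∑ y, c y • p y) t = c x * p x b := by
  simp only [Finset.sum_apply, Pi.smul_apply, smul_eq_mul, mul_sum]
  rw [sum_comm]
  simp [mul_left_comm _ (c _), ← mul_sum, hp x]

variable [Field K] {p : ι → G → K} (hp : ConvOrthogonalIdempotents p) (hne : ∀ x, p x ≠ 0)
include hp hne

lemma linearIndependent : LinearIndependent K p := by
  refine Fintype.linearIndependent_iff.mpr fun c hc x => ?_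
  obtain ⟨b, hb⟩ := Function.ne_iff.mp (hne x)
  have := hp.sum_mul_sum_smul_apply c x b
  rw [hc] at this
  simp only [Pi.zero_apply, mul_zero, sum_const_zero] at this
  exact (mul_eq_zero.mp this.symm).resolve_right hb

lemma card_le : Fintype.card ι ≤ Fintype.card G := by
  simpa using (hp.linearIndependent hne).fintype_card_le_finrank

variable (hcard : Fintype.card ι = Fintype.card G)
include hcard

lemma span_eq_top : Submodule.span K (Set.range p) = ⊤ :=
  (hp.linearIndependent hne).span_eq_top_of_card_eq_finrank' (by simpa using hcard)

lemma apply_mul_mul_apply_one (x : ι) (b c : G) : p x (b * c) * p x 1 = p x b * p x c := by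
  classical
  have translate : ∀ s, ∃ l : K, ∀ b, p x (b * s) = l * p x b := fun s => by
    obtain ⟨l, hl⟩ := (Submodule.mem_span_range_iff_exists_fun K).mp
      ((hp.span_eq_top hne hcard).ge (Submodule.mem_top (x := Pi.single s⁻¹ 1)))
    refine ⟨l x, fun b => ?_⟩
    rw [← hp.sum_mul_sum_smul_apply l x b, hl]
    simp [Pi.single_apply]
  obtain ⟨l, hl⟩ := translate c
  have hc : p x c = l * p x 1 := by simpa using hl 1
  rw [hl, hc]
  ring

lemma apply_one (x : ι) : p x 1 = 1 / Fintype.card G := by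
  have hfe := hp.apply_mul_mul_apply_one hne hcard x
  have h1 := apply_one_ne_zero_of_apply_mul_mul_apply_one hfe (hne x)
  have : Fintype.card G * (p x 1 * p x 1) = p x 1 := by
    simpa [← hfe, mul_comm] using hp x x 1
  exact eq_one_div_of_mul_eq_one_right <| mul_right_cancel₀ h1 <| by rw [one_mul, mul_assoc, this]

end ConvOrthogonalIdempotents

theorem p_norms_general {A B : Type*} [CommGroup A] [CommGroup B] [Fintype A] [Fintype B]
    [DecidableEq A] [DecidableEq B] (p : A → B → ℂ)
    (hMul : ∀ (x y : A) (b : B),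
      ∑ t : B, p x (b * t⁻¹) * p y t = if x = y then p x b else 0)
    (hComul : ∀ (x : A) (b c : B),
      ∑ t : A, p (x * t⁻¹) b * p t c = if b = c then p x b else 0)
    (hNdgA : ∀ a : A, ∃ b : B, p a b ≠ 0)
    (hNdgB : ∀ b : B, ∃ a : A, p a b ≠ 0) :
    Fintype.card A = Fintype.card B ∧
    (∀ a : A, p a 1 = 1 / (Fintype.card A : ℂ)) ∧
    (∀ b : B, p 1 b = 1 / (Fintype.card A : ℂ)) ∧
    (∀ (a : A) (b : B), ‖p a b‖ = 1 / (Fintype.card A : ℝ)) := by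
  have hA : ConvOrthogonalIdempotents p := hMul
  have hB : ConvOrthogonalIdempotents fun b a => p a b := fun x y b => hComul b x y
  have hneA : ∀ a, p a ≠ 0 := fun a => Function.ne_iff.mpr (hNdgA a)
  have hneB : ∀ b, (fun a => p a b) ≠ 0 := fun b => Function.ne_iff.mpr (hNdgB b)
  have hcard : Fintype.card A = Fintype.card B := (hA.card_le hneA).antisymm (hB.card_le hneB)
  refine ⟨hcard, fun a => ?_, hB.apply_one hneB hcard.symm, fun a b => ?_⟩
  · rw [hA.apply_one hneA hcard, hcard]
  · rw [norm_apply_eq_norm_apply_one (hA.apply_mul_mul_apply_one hneA hcard a) (hneA a),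
      hA.apply_one hneA hcard, hcard]
    simp

/-- Let `A, B` be finite abelian groups and `p : A × B → ℂ` satisfy the unitality,
counitality, multiplicativity, comultiplicativity and nondegeneracy conditions (i.e. the
coefficients of a Hopf algebra morphism `ℂ^A → ℂ[B]` with associated subgroups all of `A`
and `B`).  Then `|A| = |B|`, `p(a,1) = 1/|A|` and `p(1,b) = 1/|A|` for all `a ∈ A`,
`b ∈ B`, and `|p(a,b)| = 1/|A|` for all `a ∈ A`, `b ∈ B`. -/
theorem p_norms {A B : Type*} [CommGroup A] [CommGroup B] [Fintype A] [Fintype B]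
    [DecidableEq A] [DecidableEq B] (p : A → B → ℂ)
    (hUnit : ∀ b : B, ∑ a : A, p a b = if b = 1 then 1 else 0)
    (hCounit : ∀ a : A, ∑ b : B, p a b = if a = 1 then 1 else 0)
    (hMul : ∀ (x y : A) (b : B),
      ∑ t : B, p x (b * t⁻¹) * p y t = if x = y then p x b else 0)
    (hComul : ∀ (x : A) (b c : B),
      ∑ t : A, p (x * t⁻¹) b * p t c = if b = c then p x b else 0)
    (hNdgA : ∀ a : A, ∃ b : B, p a b ≠ 0)
    (hNdgB : ∀ b : B, ∃ a : A, p a b ≠ 0) :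
    Fintype.card A = Fintype.card B ∧
    (∀ a : A, p a 1 = 1 / (Fintype.card A : ℂ)) ∧
    (∀ b : B, p 1 b = 1 / (Fintype.card A : ℂ)) ∧
    (∀ (a : A) (b : B), ‖p a b‖ = 1 / (Fintype.card A : ℝ)) :=
  p_norms_general p hMul hComul hNdgA hNdgB
end

section
/- Let A and B be finite abelian groups and p : A × B → ℂ satisfy the unitality, counitality, multiplicativity, comultiplicativity, and nondegeneracy conditions. Then p(a, b·c) = |A|·p(a,b)·p(a,c) for all a ∈ A and b, c ∈ B, and p(a·x, b) = |A|·p(a,b)·p(x,b) for all a, x ∈ A and b ∈ B. -/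
/-!
By comultiplicativity the functions `p(·, b)` are nonzero orthogonal idempotents for convolution
on `A`, hence linearly independent, so `|B| ≤ |A|`; multiplicativity gives the symmetric
statement, so `|A| = |B|` and these functions form a basis of `ℂ^A`. Hence every translate of
`p(·, b)` is a multiple of it, which makes `p(a x, b) p(1, b) = p(a, b) p(x, b)`, and
comultiplicativity at `x = b = c` reads `|A| p(1, b)² = p(1, b)`.
-/

open Finset

/-- `p(·, b) ⋆ p(·, c) = δ_{bc} p(·, b)` for the convolution `(f ⋆ g)(x) = ∑ₜ f(x t⁻¹) g(t)`. -/
def IsConvOrthogonalIdempotents {A B : Type*} [Group A] [Fintype A] [DecidableEq B]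
    (p : A → B → ℂ) : Prop :=
  ∀ (x : A) (b c : B), ∑ t : A, p (x * t⁻¹) b * p t c = if b = c then p x b else 0

namespace IsConvOrthogonalIdempotents

variable {A B : Type*} [Group A] [Fintype A] [Fintype B] [DecidableEq B] {p : A → B → ℂ}

theorem sum_mul_sum_eq (hp : IsConvOrthogonalIdempotents p) (c : B → ℂ) (x : A) (b₀ : B) :
    ∑ t : A, (∑ b : B, c b * p (x * t⁻¹) b) * p t b₀ = c b₀ * p x b₀ := by
  simp_rw [sum_mul, mul_assoc]
  rw [sum_comm]
  simp [← mul_sum, hp x]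

theorem linearIndependent (hp : IsConvOrthogonalIdempotents p) (hp₀ : ∀ b, ∃ a, p a b ≠ 0) :
    LinearIndependent ℂ (fun b a => p a b) := by
  rw [Fintype.linearIndependent_iff]
  intro c hc b₀
  obtain ⟨a₀, ha₀⟩ := hp₀ b₀
  have hc' : ∀ y, ∑ b, c b * p y b = 0 := fun y => by simpa using congrFun hc y
  have h := hp.sum_mul_sum_eq c a₀ b₀
  simp only [hc', zero_mul, sum_const_zero] at h
  exact (mul_eq_zero.mp h.symm).resolve_right ha₀

theorem card_le (hp : IsConvOrthogonalIdempotents p) (hp₀ : ∀ b, ∃ a, p a b ≠ 0) :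
    Fintype.card B ≤ Fintype.card A := by
  simpa using (hp.linearIndependent hp₀).fintype_card_le_finrank

/-- Convolving the point mass at `s⁻¹` with `p(·, b)` translates it by `s`; writing the point mass
in the basis `p(·, b)` shows that the result is a multiple of `p(·, b)`. -/
theorem exists_forall_mul_left_eq_smul (hp : IsConvOrthogonalIdempotents p)
    (hp₀ : ∀ b, ∃ a, p a b ≠ 0) (hcard : Fintype.card A ≤ Fintype.card B) (s : A) (b : B) :
    ∃ c : ℂ, ∀ x, p (s * x) b = c * p x b := by
  classical
  have hspan := (hp.linearIndependent hp₀).span_eq_top_of_card_eq_finrank'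
    (by rw [Module.finrank_fintype_fun_eq_card]; exact le_antisymm (hp.card_le hp₀) hcard)
  obtain ⟨c, hc⟩ := (Submodule.mem_span_range_iff_exists_fun ℂ).mp
    (hspan ▸ Submodule.mem_top : (Pi.single s⁻¹ 1 : A → ℂ) ∈ _)
  have hc' : ∀ y, ∑ b, c b * p y b = (Pi.single s⁻¹ (1 : ℂ) : A → ℂ) y := fun y => by
    simpa using congrFun hc y
  refine ⟨c b, fun x => ?_⟩
  rw [← hp.sum_mul_sum_eq c x b, Fintype.sum_eq_single (s * x)]
  · simp [hc']
  · intro t ht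
    rw [hc', Pi.single_apply, if_neg, zero_mul]
    intro h
    rw [mul_inv_eq_iff_eq_mul, eq_inv_mul_iff_mul_eq] at h
    exact ht h.symm

theorem mul_apply_mul_apply_one (hp : IsConvOrthogonalIdempotents p)
    (hp₀ : ∀ b, ∃ a, p a b ≠ 0) (hcard : Fintype.card A ≤ Fintype.card B) (a x : A) (b : B) :
    p (a * x) b * p 1 b = p a b * p x b := by
  obtain ⟨c, hc⟩ := hp.exists_forall_mul_left_eq_smul hp₀ hcard a b
  have ha := hc 1
  rw [mul_one] at ha
  rw [hc, ha]
  ring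

theorem card_mul_apply_one (hp : IsConvOrthogonalIdempotents p)
    (hp₀ : ∀ b, ∃ a, p a b ≠ 0) (hcard : Fintype.card A ≤ Fintype.card B) (b : B) :
    Fintype.card A * p 1 b = 1 := by
  have hmul := hp.mul_apply_mul_apply_one hp₀ hcard
  have hone : p 1 b ≠ 0 := by
    intro h
    obtain ⟨a, ha⟩ := hp₀ b
    have := hmul a a b
    rw [h, mul_zero] at this
    exact ha (mul_self_eq_zero.mp this.symm)
  have h := hp 1 b b
  simp only [one_mul, if_true] at h
  have hterm : ∀ t : A, p t⁻¹ b * p t b = p 1 b * p 1 b := fun t => by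
    rw [← hmul, inv_mul_cancel]
  rw [Fintype.sum_congr _ _ hterm, sum_const, card_univ, nsmul_eq_mul] at h
  apply mul_right_cancel₀ hone
  rw [one_mul, mul_assoc, h]

theorem apply_mul (hp : IsConvOrthogonalIdempotents p) (hp₀ : ∀ b, ∃ a, p a b ≠ 0)
    (hcard : Fintype.card A ≤ Fintype.card B) (a x : A) (b : B) :
    p (a * x) b = Fintype.card A * p a b * p x b := by
  calc p (a * x) b = (Fintype.card A * p 1 b) * p (a * x) b := by
        rw [hp.card_mul_apply_one hp₀ hcard, one_mul]
    _ = Fintype.card A * (p (a * x) b * p 1 b) := by ring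
    _ = Fintype.card A * p a b * p x b := by
        rw [hp.mul_apply_mul_apply_one hp₀ hcard, mul_assoc]

end IsConvOrthogonalIdempotents

theorem p_simpler_general {A B : Type*} [CommGroup A] [CommGroup B] [Fintype A] [Fintype B]
    [DecidableEq A] [DecidableEq B] (p : A → B → ℂ)
    (hMul : ∀ (x y : A) (b : B),
      ∑ t : B, p x (b * t⁻¹) * p y t = if x = y then p x b else 0)
    (hComul : ∀ (x : A) (b c : B),
      ∑ t : A, p (x * t⁻¹) b * p t c = if b = c then p x b else 0)
    (hNdgA : ∀ a : A, ∃ b : B, p a b ≠ 0)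
    (hNdgB : ∀ b : B, ∃ a : A, p a b ≠ 0) :
    (∀ (a : A) (b c : B),
      p a (b * c) = (Fintype.card A : ℂ) * p a b * p a c) ∧
    (∀ (a x : A) (b : B),
      p (a * x) b = (Fintype.card A : ℂ) * p a b * p x b) := by
  have hA : IsConvOrthogonalIdempotents p := hComul
  have hB : IsConvOrthogonalIdempotents (fun b a => p a b) := fun b x y => hMul x y b
  have hcard : Fintype.card A = Fintype.card B :=
    le_antisymm (hB.card_le hNdgA) (hA.card_le hNdgB)
  refine ⟨fun a b c => ?_, hA.apply_mul hNdgB hcard.le⟩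
  simpa [hcard] using hB.apply_mul hNdgA hcard.ge b c a

/-- Under the unitality, counitality, multiplicativity, comultiplicativity and
nondegeneracy conditions: `p(a, b·c) = |A|·p(a,b)·p(a,c)` for all `a ∈ A`, `b, c ∈ B`, and
`p(a·x, b) = |A|·p(a,b)·p(x,b)` for all `a, x ∈ A`, `b ∈ B`. -/
theorem p_simpler {A B : Type*} [CommGroup A] [CommGroup B] [Fintype A] [Fintype B]
    [DecidableEq A] [DecidableEq B] (p : A → B → ℂ)
    (hUnit : ∀ b : B, ∑ a : A, p a b = if b = 1 then 1 else 0)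
    (hCounit : ∀ a : A, ∑ b : B, p a b = if a = 1 then 1 else 0)
    (hMul : ∀ (x y : A) (b : B),
      ∑ t : B, p x (b * t⁻¹) * p y t = if x = y then p x b else 0)
    (hComul : ∀ (x : A) (b c : B),
      ∑ t : A, p (x * t⁻¹) b * p t c = if b = c then p x b else 0)
    (hNdgA : ∀ a : A, ∃ b : B, p a b ≠ 0)
    (hNdgB : ∀ b : B, ∃ a : A, p a b ≠ 0) :
    (∀ (a : A) (b c : B),
      p a (b * c) = (Fintype.card A : ℂ) * p a b * p a c) ∧
    (∀ (a x : A) (b : B),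
      p (a * x) b = (Fintype.card A : ℂ) * p a b * p x b) :=
  p_simpler_general p hMul hComul hNdgA hNdgB
end

section
/- Let A and B be finite abelian groups and p : A × B → ℂ satisfy the unitality, counitality, multiplicativity, comultiplicativity, and nondegeneracy conditions. Then p(a, b⁻¹) equals the complex conjugate of p(a,b) for all a ∈ A and b ∈ B. -/
/-!
Fix `a` and put `f = p(a, ·)`. Multiplicativity at `x = y = a` says that `f` is an idempotent
for convolution on `B`. Its Fourier coefficients `∑ x, f x * ψ x` are then idempotent complex
numbers, i.e. `0` or `1`, and in particular real. Since characters of a finite group take values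
on the unit circle, `ψ (-x) = conj (ψ x)`, so Fourier inversion turns the reality of the
coefficients into `f (-x) = conj (f x)`.
-/

open Finset ComplexConjugate

namespace AddChar

variable {G : Type*} [AddCommGroup G] [Fintype G]

lemma sum_conv_mul_eq_mul (f g : G → ℂ) (ψ : AddChar G ℂ) :
    ∑ x, (∑ t, f (x - t) * g t) * ψ x = (∑ x, f x * ψ x) * ∑ t, g t * ψ t := by
  rw [sum_mul_sum, sum_comm]
  simp_rw [sum_mul]
  rw [sum_comm]
  refine sum_congr rfl fun t _ ↦ Fintype.sum_equiv (Equiv.subRight t) _ _ fun x ↦ ?_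
  rw [Equiv.subRight_apply, mul_mul_mul_comm, ← map_add_eq_mul, sub_add_cancel]

lemma sum_sum_mul_mul_apply_eq_card_mul (f : G → ℂ) (y : G) :
    ∑ ψ : AddChar G ℂ, (∑ x, f x * ψ x) * ψ y = Fintype.card G * f (-y) := by
  classical
  simp_rw [sum_mul, mul_assoc, ← map_add_eq_mul]
  rw [sum_comm]
  simp_rw [← mul_sum, sum_apply_eq_ite, add_eq_zero_iff_eq_neg, mul_ite, mul_zero]
  rw [sum_ite_eq' univ (-y), if_pos (mem_univ _), mul_comm]

lemma apply_neg_eq_conj_of_conv_self {f : G → ℂ} (hf : ∀ x, ∑ t, f (x - t) * f t = f x)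
    (x : G) : f (-x) = conj (f x) := by
  have hcoeff_real (ψ : AddChar G ℂ) : conj (∑ y, f y * ψ y) = ∑ y, f y * ψ y := by
    have hidem : IsIdempotentElem (∑ y, f y * ψ y) := by
      rw [IsIdempotentElem, ← sum_conv_mul_eq_mul]
      simp only [hf]
    rcases IsIdempotentElem.iff_eq_zero_or_one.mp hidem with h | h <;> simp [h]
  have hcard : (Fintype.card G : ℂ) ≠ 0 := Nat.cast_ne_zero.mpr Fintype.card_ne_zero
  refine mul_left_cancel₀ hcard ?_
  calc (Fintype.card G : ℂ) * f (-x)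
      = ∑ ψ : AddChar G ℂ, (∑ y, f y * ψ y) * ψ x :=
        (sum_sum_mul_mul_apply_eq_card_mul f x).symm
    _ = conj (∑ ψ : AddChar G ℂ, (∑ y, f y * ψ y) * ψ (-x)) := by
      simp only [map_sum, map_mul, hcoeff_real, ← map_neg_eq_conj, neg_neg]
    _ = Fintype.card G * conj (f x) := by
      rw [sum_sum_mul_mul_apply_eq_card_mul, neg_neg, map_mul, map_natCast]

end AddChar

theorem p_inv_conj_general {A B : Type*} [CommGroup B] [Fintype B]
    [DecidableEq A] (p : A → B → ℂ)
    (hMul : ∀ (x y : A) (b : B),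
      ∑ t : B, p x (b * t⁻¹) * p y t = if x = y then p x b else 0) :
    ∀ (a : A) (b : B), p a b⁻¹ = (starRingEnd ℂ) (p a b) := by
  intro a b
  have hconv (x : Additive B) : ∑ t, p a (x - t).toMul * p a t.toMul = p a x.toMul := by
    have h := hMul a a x.toMul
    rw [if_pos rfl, ← Additive.toMul.sum_comp] at h
    simpa [div_eq_mul_inv] using h
  exact AddChar.apply_neg_eq_conj_of_conv_self (f := fun x : Additive B ↦ p a x.toMul) hconv
    (.ofMul b)

/-- Under the unitality, counitality, multiplicativity, comultiplicativity and
nondegeneracy conditions: `p(a, b⁻¹)` is the complex conjugate of `p(a,b)` for all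
`a ∈ A`, `b ∈ B`. -/
theorem p_inv_conj {A B : Type*} [CommGroup A] [CommGroup B] [Fintype A] [Fintype B]
    [DecidableEq A] [DecidableEq B] (p : A → B → ℂ)
    (hUnit : ∀ b : B, ∑ a : A, p a b = if b = 1 then 1 else 0)
    (hCounit : ∀ a : A, ∑ b : B, p a b = if a = 1 then 1 else 0)
    (hMul : ∀ (x y : A) (b : B),
      ∑ t : B, p x (b * t⁻¹) * p y t = if x = y then p x b else 0)
    (hComul : ∀ (x : A) (b c : B),
      ∑ t : A, p (x * t⁻¹) b * p t c = if b = c then p x b else 0)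
    (hNdgA : ∀ a : A, ∃ b : B, p a b ≠ 0)
    (hNdgB : ∀ b : B, ∃ a : A, p a b ≠ 0) :
    ∀ (a : A) (b : B), p a b⁻¹ = (starRingEnd ℂ) (p a b) :=
  p_inv_conj_general p hMul
end

section
/- Let A and B be finite abelian groups and p : A × B → ℂ satisfy the unitality, counitality, multiplicativity, comultiplicativity, and nondegeneracy conditions. Then p(a, b⁻¹) = p(a⁻¹, b) for all a ∈ A and b ∈ B. -/
/-!
Extend `p` to the function `F (a, b) = p a b` on the group `A × B` and work in the group
algebra `ℂ[A × B]`, whose product is convolution. Multiplicativity and unitality say that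
`G (a, b) = p a⁻¹ b` is a right inverse of `F`; comultiplicativity and counitality say that
`H (a, b) = p a b⁻¹` is a left inverse of `F`. In a monoid a left and a right inverse of the
same element coincide, so `H = G`.
-/

open MonoidAlgebra

namespace MonoidAlgebra

variable {R : Type*} [Semiring R]

noncomputable def ofFun {G : Type*} [Fintype G] (f : G → R) : R[G] :=
  ofCoeff (Finsupp.equivFunOnFinite.symm f)

@[simp]
lemma coeff_ofFun {G : Type*} [Fintype G] (f : G → R) (g : G) : (ofFun f).coeff g = f g := rfl

lemma ofFun_injective {G : Type*} [Fintype G] : Function.Injective (ofFun : (G → R) → R[G]) :=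
  fun f f' h ↦ funext fun g ↦ by rw [← coeff_ofFun f, h, coeff_ofFun]

lemma coeff_one_apply {M : Type*} [One M] [DecidableEq M] (m : M) :
    (1 : R[M]).coeff m = if m = 1 then 1 else 0 := by
  simp [one_def, coeff_single, Finsupp.single_apply, eq_comm]

lemma coeff_mul_eq_sum {G : Type*} [Group G] [Fintype G] (x y : R[G]) (g : G) :
    (x * y).coeff g = ∑ h, x.coeff h * y.coeff (h⁻¹ * g) := by
  rw [coeff_mul_apply_left, Finsupp.sum_fintype _ _ fun _ ↦ zero_mul _]

end MonoidAlgebra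

lemma sum_mul_apply_inv_mul {R A B : Type*} [Semiring R] [Group B] [Fintype B] [DecidableEq A]
    (p : A → B → R)
    (hMul : ∀ (x y : A) (b : B), ∑ t : B, p x (b * t⁻¹) * p y t = if x = y then p x b else 0)
    (x y : A) (b : B) : ∑ s : B, p x s * p y (s⁻¹ * b) = if x = y then p x b else 0 := by
  rw [← hMul]
  exact (Fintype.sum_equiv (Equiv.divLeft b) _ _ fun t ↦ by simp [div_eq_mul_inv]).symm

lemma sum_apply_mul_apply_inv_mul {R A B : Type*} [Semiring R] [Group A] [Fintype A]
    [DecidableEq B] (p : A → B → R)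
    (hComul : ∀ (x : A) (b c : B), ∑ t : A, p (x * t⁻¹) b * p t c = if b = c then p x b else 0)
    (a : A) (b c : B) : ∑ x : A, p x b * p (x⁻¹ * a) c = if b = c then p a b else 0 := by
  rw [← hComul]
  exact (Fintype.sum_equiv (Equiv.divLeft a) _ _ fun t ↦ by simp [div_eq_mul_inv]).symm

section

variable {R A B : Type*} [Semiring R] [Group A] [Group B] [Fintype A] [Fintype B]
  [DecidableEq A] [DecidableEq B] (p : A → B → R)

lemma ofFun_mul_ofFun_inv_fst
    (hUnit : ∀ b : B, ∑ a : A, p a b = if b = 1 then 1 else 0)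
    (hMul : ∀ (x y : A) (b : B), ∑ t : B, p x (b * t⁻¹) * p y t = if x = y then p x b else 0) :
    ofFun (fun c : A × B ↦ p c.1 c.2) * ofFun (fun c ↦ p c.1⁻¹ c.2) = 1 := by
  ext ⟨a, b⟩
  simp only [coeff_mul_eq_sum, Fintype.sum_prod_type, coeff_ofFun, Prod.fst_mul, Prod.snd_mul,
    Prod.fst_inv, Prod.snd_inv, coeff_one_apply, Prod.mk_eq_one, sum_mul_apply_inv_mul p hMul,
    mul_inv_rev, inv_inv, right_eq_mul, inv_eq_one, Finset.sum_ite_irrel, Finset.sum_const_zero]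
  rw [hUnit, ite_and]

lemma ofFun_inv_snd_mul_ofFun
    (hCounit : ∀ a : A, ∑ b : B, p a b = if a = 1 then 1 else 0)
    (hComul : ∀ (x : A) (b c : B), ∑ t : A, p (x * t⁻¹) b * p t c = if b = c then p x b else 0) :
    ofFun (fun c : A × B ↦ p c.1 c.2⁻¹) * ofFun (fun c ↦ p c.1 c.2) = 1 := by
  ext ⟨a, b⟩
  simp only [coeff_mul_eq_sum, Fintype.sum_prod_type, coeff_ofFun, Prod.fst_mul, Prod.snd_mul,
    Prod.fst_inv, Prod.snd_inv, coeff_one_apply, Prod.mk_eq_one]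
  rw [Finset.sum_comm]
  simp only [sum_apply_mul_apply_inv_mul p hComul, left_eq_mul, Finset.sum_ite_irrel,
    Finset.sum_const_zero]
  rw [Fintype.sum_equiv (Equiv.inv B) (fun x ↦ p a x⁻¹) (p a) fun _ ↦ rfl, hCounit, ← ite_and]
  exact if_congr and_comm rfl rfl

end

theorem p_antipode_general {A B : Type*} [CommGroup A] [CommGroup B] [Fintype A] [Fintype B]
    [DecidableEq A] [DecidableEq B] (p : A → B → ℂ)
    (hUnit : ∀ b : B, ∑ a : A, p a b = if b = 1 then 1 else 0)
    (hCounit : ∀ a : A, ∑ b : B, p a b = if a = 1 then 1 else 0)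
    (hMul : ∀ (x y : A) (b : B),
      ∑ t : B, p x (b * t⁻¹) * p y t = if x = y then p x b else 0)
    (hComul : ∀ (x : A) (b c : B),
      ∑ t : A, p (x * t⁻¹) b * p t c = if b = c then p x b else 0) :
    ∀ (a : A) (b : B), p a b⁻¹ = p a⁻¹ b := by
  intro a b
  have hInv := left_inv_eq_right_inv (ofFun_inv_snd_mul_ofFun p hCounit hComul)
    (ofFun_mul_ofFun_inv_fst p hUnit hMul)
  exact congr_fun (ofFun_injective hInv) (a, b)

/-- Under the unitality, counitality, multiplicativity, comultiplicativity and
nondegeneracy conditions: `p(a, b⁻¹) = p(a⁻¹, b)` for all `a ∈ A`, `b ∈ B`. -/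
theorem p_antipode {A B : Type*} [CommGroup A] [CommGroup B] [Fintype A] [Fintype B]
    [DecidableEq A] [DecidableEq B] (p : A → B → ℂ)
    (hUnit : ∀ b : B, ∑ a : A, p a b = if b = 1 then 1 else 0)
    (hCounit : ∀ a : A, ∑ b : B, p a b = if a = 1 then 1 else 0)
    (hMul : ∀ (x y : A) (b : B),
      ∑ t : B, p x (b * t⁻¹) * p y t = if x = y then p x b else 0)
    (hComul : ∀ (x : A) (b c : B),
      ∑ t : A, p (x * t⁻¹) b * p t c = if b = c then p x b else 0)
    (hNdgA : ∀ a : A, ∃ b : B, p a b ≠ 0)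
    (hNdgB : ∀ b : B, ∃ a : A, p a b ≠ 0) :
    ∀ (a : A) (b : B), p a b⁻¹ = p a⁻¹ b :=
  p_antipode_general p hUnit hCounit hMul hComul
end

section
/- Let A and B be finite abelian groups with |A| = |B|, let σ : A × B → ℂ be a bicharacter, and define p : A × B → ℂ by p(a,b) = σ(a,b)/|A|. Then p satisfies the unitality, counitality, multiplicativity, and comultiplicativity conditions if and only if σ is orthogonal. -/
/-!
Multiplicativity of the bicharacter turns the orthogonality sums into
`∑_b σ(x y⁻¹, b)` and `∑_a σ(a, k l⁻¹)`, and turns the convolutions in the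
(co)multiplicativity conditions into `σ(x, b) ∑_t σ(x⁻¹ y, t)` and `σ(x, b) ∑_t σ(t, b⁻¹ c)`,
while (co)unitality is literally a statement about the sums `∑_a σ(a, b)` and `∑_b σ(a, b)`.
So both sides of the equivalence are restatements of the single condition
`∑_b σ(a, b) = |B| δ_{a,1}` and `∑_a σ(a, b) = |A| δ_{b,1}`.
-/

open ComplexConjugate

lemma div_eq_ite_iff {N s : ℂ} (hN : N ≠ 0) (P : Prop) [Decidable P] :
    s / N = (if P then 1 else 0) ↔ s = if P then N else 0 := by
  rw [div_eq_iff hN, ite_mul, one_mul, zero_mul]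

structure IsBicharacter {A B : Type*} [Mul A] [Mul B] (σ : A → B → ℂ) : Prop where
  ne_zero : ∀ a b, σ a b ≠ 0
  map_mul_left : ∀ a a' b, σ (a * a') b = σ a b * σ a' b
  map_mul_right : ∀ a b b', σ a (b * b') = σ a b * σ a b'

namespace IsBicharacter

variable {A B : Type*} {σ : A → B → ℂ}

theorem swap [Mul A] [Mul B] (hσ : IsBicharacter σ) : IsBicharacter fun b a => σ a b :=
  ⟨fun b a => hσ.ne_zero a b, fun b b' a => hσ.map_mul_right a b b',
    fun b a a' => hσ.map_mul_left a a' b⟩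

variable [Group A] [Group B]

def rightHom (hσ : IsBicharacter σ) (a : A) : B →* ℂ where
  toFun b := σ a b
  map_one' := mul_left_cancel₀ (hσ.ne_zero a 1) (by rw [← hσ.map_mul_right, one_mul, mul_one])
  map_mul' := hσ.map_mul_right a

theorem map_inv_right (hσ : IsBicharacter σ) (a : A) (b : B) : σ a b⁻¹ = (σ a b)⁻¹ :=
  map_inv (hσ.rightHom a) b

theorem map_inv_left (hσ : IsBicharacter σ) (a : A) (b : B) : σ a⁻¹ b = (σ a b)⁻¹ :=
  hσ.swap.map_inv_right b a

theorem conj_eq_inv [Finite B] (hσ : IsBicharacter σ) (a : A) (b : B) :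
    conj (σ a b) = (σ a b)⁻¹ := by
  have hpow : σ a b ^ Nat.card B = 1 := by
    change hσ.rightHom a b ^ _ = 1
    rw [← map_pow, pow_card_eq_one', map_one]
  exact (Complex.inv_eq_conj (Complex.norm_eq_one_of_pow_eq_one hpow Nat.card_pos.ne')).symm

theorem mul_conj_eq [Finite B] (hσ : IsBicharacter σ) (x y : A) (b : B) :
    σ x b * conj (σ y b) = σ (x * y⁻¹) b := by
  rw [hσ.conj_eq_inv, ← hσ.map_inv_left, hσ.map_mul_left]

theorem orthogonal_left_iff [Fintype B] [DecidableEq A] (hσ : IsBicharacter σ) :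
    (∀ x y : A, (1 / (Fintype.card B : ℂ)) * ∑ b : B, σ x b * conj (σ y b)
        = if x = y then 1 else 0) ↔
      ∀ a : A, ∑ b : B, σ a b = if a = 1 then (Fintype.card B : ℂ) else 0 := by
  have hN : (Fintype.card B : ℂ) ≠ 0 := Nat.cast_ne_zero.mpr Fintype.card_ne_zero
  simp only [hσ.mul_conj_eq, one_div_mul_eq_div, div_eq_ite_iff hN]
  refine ⟨fun h a => by simpa using h a 1, fun h x y => by simp only [h, mul_inv_eq_one]⟩

theorem orthogonal_right_iff [Fintype A] [DecidableEq B] (hσ : IsBicharacter σ) :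
    (∀ k l : B, (1 / (Fintype.card A : ℂ)) * ∑ a : A, σ a k * conj (σ a l)
        = if k = l then 1 else 0) ↔
      ∀ b : B, ∑ a : A, σ a b = if b = 1 then (Fintype.card A : ℂ) else 0 :=
  hσ.swap.orthogonal_left_iff

theorem sum_conv_right_eq_ite [Fintype B] [DecidableEq A] (hσ : IsBicharacter σ)
    (hrow : ∀ a : A, ∑ b : B, σ a b = if a = 1 then (Fintype.card B : ℂ) else 0)
    (x y : A) (b : B) :
    ∑ t : B, σ x (b * t⁻¹) / Fintype.card B * (σ y t / Fintype.card B)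
      = if x = y then σ x b / Fintype.card B else 0 := by
  have hN : (Fintype.card B : ℂ) ≠ 0 := Nat.cast_ne_zero.mpr Fintype.card_ne_zero
  have hterm (t : B) : σ x (b * t⁻¹) / Fintype.card B * (σ y t / Fintype.card B)
      = σ x b / Fintype.card B ^ 2 * σ (x⁻¹ * y) t := by
    rw [hσ.map_mul_right, hσ.map_inv_right, hσ.map_mul_left, hσ.map_inv_left]
    field_simp [hσ.ne_zero x t]
  rw [Finset.sum_congr rfl fun t _ => hterm t, ← Finset.mul_sum, hrow]
  simp only [inv_mul_eq_one, mul_ite, mul_zero]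
  split_ifs <;> field_simp

theorem sum_conv_left_eq_ite [Fintype A] [DecidableEq B] (hσ : IsBicharacter σ)
    (hcol : ∀ b : B, ∑ a : A, σ a b = if b = 1 then (Fintype.card A : ℂ) else 0)
    (x : A) (b c : B) :
    ∑ t : A, σ (x * t⁻¹) b / Fintype.card A * (σ t c / Fintype.card A)
      = if b = c then σ x b / Fintype.card A else 0 :=
  hσ.swap.sum_conv_right_eq_ite hcol b c x

end IsBicharacter

/-- Let `A, B` be finite abelian groups with `|A| = |B|`, let `σ : A × B → ℂ` be a
bicharacter, and define `p(a,b) = σ(a,b)/|A|`.  Then `p` satisfies the unitality,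
counitality, multiplicativity and comultiplicativity conditions if and only if `σ` is
orthogonal. -/
theorem p_hopf_iff_orthogonal {A B : Type*} [CommGroup A] [CommGroup B]
    [Fintype A] [Fintype B] [DecidableEq A] [DecidableEq B]
    (hcard : Fintype.card A = Fintype.card B)
    (σ : A → B → ℂ)
    (hσ0 : ∀ (a : A) (b : B), σ a b ≠ 0)
    (hσ1 : ∀ (a a' : A) (b : B), σ (a * a') b = σ a b * σ a' b)
    (hσ2 : ∀ (a : A) (b b' : B), σ a (b * b') = σ a b * σ a b')
    (p : A → B → ℂ)
    (hp : ∀ (a : A) (b : B), p a b = σ a b / (Fintype.card A : ℂ)) :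
    ((∀ b : B, ∑ a : A, p a b = if b = 1 then 1 else 0) ∧
     (∀ a : A, ∑ b : B, p a b = if a = 1 then 1 else 0) ∧
     (∀ (x y : A) (b : B),
       ∑ t : B, p x (b * t⁻¹) * p y t = if x = y then p x b else 0) ∧
     (∀ (x : A) (b c : B),
       ∑ t : A, p (x * t⁻¹) b * p t c = if b = c then p x b else 0)) ↔
    ((∀ x y : A,
       (1 / (Fintype.card B : ℂ)) * ∑ b : B, σ x b * (starRingEnd ℂ) (σ y b)
         = if x = y then 1 else 0) ∧
     (∀ k l : B,
       (1 / (Fintype.card A : ℂ)) * ∑ a : A, σ a k * (starRingEnd ℂ) (σ a l)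
         = if k = l then 1 else 0)) := by
  have hσ : IsBicharacter σ := ⟨hσ0, hσ1, hσ2⟩
  have hN : (Fintype.card A : ℂ) ≠ 0 := Nat.cast_ne_zero.mpr Fintype.card_ne_zero
  obtain rfl : p = fun a b => σ a b / Fintype.card A := funext₂ hp
  simp only [← Finset.sum_div, div_eq_ite_iff hN]
  rw [hσ.orthogonal_left_iff, hσ.orthogonal_right_iff]
  constructor
  · rintro ⟨hcol, hrow, -, -⟩
    exact ⟨by simpa only [hcard] using hrow, hcol⟩
  · rintro ⟨hrow, hcol⟩
    refine ⟨hcol, by simpa only [hcard] using hrow, ?_, hσ.sum_conv_left_eq_ite hcol⟩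
    simpa only [hcard] using hσ.sum_conv_right_eq_ite hrow
end

section
/- Let A and B be finite abelian groups and p : A × B → ℂ satisfy the unitality, counitality, multiplicativity, comultiplicativity, and nondegeneracy conditions. Then the assignment sending b ∈ B to the function a ↦ |A|·p(a,b) is a group isomorphism from B onto the character group Hom(A, ℂˣ) of A. -/
/-!
Fourier transform in `A` turns the comultiplicativity of `p` into multiplicativity: for every
character `χ` of `A`, the values `p̂(b, χ) = ∑ₐ p(a,b) χ(a)⁻¹` form a complete family of
orthogonal idempotents of `ℂ`, hence are `1` at a single point `β χ ∈ B` and `0` elsewhere.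
Fourier inversion then gives `|A| p(a,b) = ∑_{β χ = b} χ(a)`, so nondegeneracy makes `β`
surjective and `|B| ≤ |A|`. The symmetric argument gives `|A| ≤ |B|`, so `β` is a bijection
whose inverse sends `b` to the character `a ↦ |A| p(a,b)`. Exchanging the roles of `A` and `B`
shows that `|B| p(a,b) = |A| p(a,b)` is also a character in `b`, so this bijection is a group
isomorphism.
-/

open Finset

lemma CompleteOrthogonalIdempotents.exists_eq_single {R I : Type*} [Semiring R] [IsDomain R]
    [Fintype I] [DecidableEq I] {e : I → R} (he : CompleteOrthogonalIdempotents e) :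
    ∃ i, e = Pi.single i 1 := by
  obtain ⟨i, -, hi⟩ := exists_ne_zero_of_sum_ne_zero (he.complete ▸ one_ne_zero)
  have hi_one : e i = 1 := (IsIdempotentElem.iff_eq_zero_or_one.mp (he.idem i)).resolve_left hi
  refine ⟨i, funext fun j => ?_⟩
  rcases eq_or_ne j i with rfl | hj
  · simp [hi_one]
  · simpa [hj, hi_one] using he.ortho hj

section Fourier

variable {A : Type*} [CommGroup A] [Fintype A]

lemma card_monoidHom_units_complex [Fintype (A →* ℂˣ)] :
    Fintype.card (A →* ℂˣ) = Fintype.card A := by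
  simpa only [Fintype.card_eq_nat_card] using
    CommGroup.card_monoidHom_of_hasEnoughRootsOfUnity A ℂ

lemma sum_monoidHom_units_apply [Fintype (A →* ℂˣ)] [DecidableEq A] (a : A) :
    ∑ χ : A →* ℂˣ, (χ a : ℂ) = if a = 1 then (Fintype.card A : ℂ) else 0 := by
  split_ifs with ha
  · simp [ha, card_monoidHom_units_complex]
  · obtain ⟨χ₀, hχ₀⟩ := CommGroup.exists_apply_ne_one_of_hasEnoughRootsOfUnity A ℂ ha
    refine sum_hom_units_eq_zero ((Units.coeHom ℂ).comp (MonoidHom.eval a)) fun h => hχ₀ ?_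
    exact Units.ext (DFunLike.congr_fun h χ₀)

def charTransform (f : A → ℂ) (χ : A →* ℂˣ) : ℂ :=
  ∑ a, f a * (χ a⁻¹ : ℂ)

lemma charTransform_conv (f g : A → ℂ) (χ : A →* ℂˣ) :
    charTransform (fun x => ∑ t, f (x * t⁻¹) * g t) χ =
      charTransform f χ * charTransform g χ := by
  rw [charTransform, charTransform, charTransform, sum_mul_sum, sum_comm]
  simp_rw [sum_mul]
  rw [sum_comm]
  refine sum_congr rfl fun t _ => Fintype.sum_equiv (Equiv.mulRight t⁻¹) _ _ fun x => ?_
  have hχ : (χ (x * t⁻¹)⁻¹ : ℂ) * χ t⁻¹ = χ x⁻¹ := by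
    rw [← Units.val_mul, ← map_mul, mul_inv_rev, inv_inv, mul_inv_cancel_comm]
  rw [Equiv.coe_mulRight, ← hχ]
  ring

lemma charTransform_inversion [Fintype (A →* ℂˣ)] (f : A → ℂ) (a : A) :
    ∑ χ : A →* ℂˣ, charTransform f χ * χ a = Fintype.card A * f a := by
  classical
  have hshift (x : A) (χ : A →* ℂˣ) :
      f x * (χ x⁻¹ : ℂ) * χ a = f x * χ (x⁻¹ * a) := by
    rw [map_mul, Units.val_mul, mul_assoc]
  simp_rw [charTransform, sum_mul, hshift]
  rw [sum_comm]
  simp_rw [← mul_sum, sum_monoidHom_units_apply, inv_mul_eq_one, mul_ite, mul_zero,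
    sum_ite_eq', mem_univ, if_true, mul_comm]

lemma eq_zero_of_charTransform_eq_zero [Fintype (A →* ℂˣ)] {f : A → ℂ}
    (hf : ∀ χ, charTransform f χ = 0) : f = 0 := by
  funext a
  have h := charTransform_inversion f a
  simp only [hf, zero_mul, sum_const_zero] at h
  exact (mul_eq_zero.mp h.symm).resolve_left (Nat.cast_ne_zero.mpr Fintype.card_ne_zero)

end Fourier

/-- `p` is the matrix of a coalgebra morphism `ℂ^A → ℂ[B]`, `e_a ↦ ∑_b p(a,b) b`, in whose
image every `b ∈ B` occurs. -/
structure IsNondegCoalgebraHom {A B : Type*} [CommGroup A] [Fintype A] [DecidableEq A]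
    [Fintype B] [DecidableEq B] (p : A → B → ℂ) : Prop where
  counit : ∀ a : A, ∑ b : B, p a b = if a = 1 then 1 else 0
  comul : ∀ (x : A) (b c : B), ∑ t : A, p (x * t⁻¹) b * p t c = if b = c then p x b else 0
  nondeg : ∀ b : B, ∃ a : A, p a b ≠ 0

namespace IsNondegCoalgebraHom

variable {A B : Type*} [CommGroup A] [Fintype A] [DecidableEq A] [Fintype B] [DecidableEq B]
  {p : A → B → ℂ}

lemma completeOrthogonalIdempotents_charTransform (hp : IsNondegCoalgebraHom p)
    (χ : A →* ℂˣ) : CompleteOrthogonalIdempotents fun b => charTransform (p · b) χ := by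
  refine ⟨OrthogonalIdempotents.iff_mul_eq.mpr fun b c => ?_, ?_⟩
  · rw [← charTransform_conv]
    simp_rw [hp.comul]
    split_ifs <;> simp [charTransform]
  · simp_rw [charTransform]
    rw [sum_comm]
    simp_rw [← sum_mul, hp.counit]
    simp

lemma exists_surjective_charTransform_eq_single (hp : IsNondegCoalgebraHom p) :
    ∃ β : (A →* ℂˣ) → B, Function.Surjective β ∧
      ∀ χ b, charTransform (p · b) χ = (Pi.single (β χ) 1 : B → ℂ) b := by
  have := Fintype.ofFinite (A →* ℂˣ)
  choose β hβ using fun χ => (hp.completeOrthogonalIdempotents_charTransform χ).exists_eq_single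
  refine ⟨β, fun b => ?_, fun χ b => congrFun (hβ χ) b⟩
  by_contra! hb
  obtain ⟨a, ha⟩ := hp.nondeg b
  refine ha (congrFun (eq_zero_of_charTransform_eq_zero (f := (p · b)) fun χ => ?_) a)
  rw [congrFun (hβ χ) b, Pi.single_apply, if_neg (hb χ).symm]

lemma card_le (hp : IsNondegCoalgebraHom p) : Fintype.card B ≤ Fintype.card A := by
  have := Fintype.ofFinite (A →* ℂˣ)
  obtain ⟨β, hβ, -⟩ := hp.exists_surjective_charTransform_eq_single
  simpa only [card_monoidHom_units_complex] using Fintype.card_le_of_surjective β hβ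

lemma exists_equiv (hp : IsNondegCoalgebraHom p) (hcard : Fintype.card A ≤ Fintype.card B) :
    ∃ E : B ≃ (A →* ℂˣ), ∀ b a, (E b a : ℂ) = Fintype.card A * p a b := by
  have := Fintype.ofFinite (A →* ℂˣ)
  obtain ⟨β, hβ_surj, hβ⟩ := hp.exists_surjective_charTransform_eq_single
  have hβ_bij : β.Bijective := (Fintype.bijective_iff_surjective_and_card β).mpr
    ⟨hβ_surj, card_monoidHom_units_complex.trans (le_antisymm hcard hp.card_le)⟩
  set e := Equiv.ofBijective β hβ_bij
  refine ⟨e.symm, fun b a => ?_⟩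
  calc (e.symm b a : ℂ) = ∑ c, (Pi.single (β (e.symm c)) 1 : B → ℂ) b * e.symm c a := by
        simp [e, Pi.single_apply, Equiv.ofBijective_apply_symm_apply]
    _ = ∑ χ, charTransform (p · b) χ * χ a := by
        simp_rw [hβ]
        exact e.symm.sum_comp fun χ => (Pi.single (β χ) 1 : B → ℂ) b * χ a
    _ = Fintype.card A * p a b := charTransform_inversion _ a

end IsNondegCoalgebraHom

/-- Under the unitality, counitality, multiplicativity, comultiplicativity and
nondegeneracy conditions, the assignment sending `b ∈ B` to the character
`a ↦ |A|·p(a,b)` is a group isomorphism from `B` onto the character group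
`Hom(A, ℂˣ)` of `A`. -/
theorem p_character_equiv {A B : Type*} [CommGroup A] [CommGroup B] [Fintype A] [Fintype B]
    [DecidableEq A] [DecidableEq B] (p : A → B → ℂ)
    (hUnit : ∀ b : B, ∑ a : A, p a b = if b = 1 then 1 else 0)
    (hCounit : ∀ a : A, ∑ b : B, p a b = if a = 1 then 1 else 0)
    (hMul : ∀ (x y : A) (b : B),
      ∑ t : B, p x (b * t⁻¹) * p y t = if x = y then p x b else 0)
    (hComul : ∀ (x : A) (b c : B),
      ∑ t : A, p (x * t⁻¹) b * p t c = if b = c then p x b else 0)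
    (hNdgA : ∀ a : A, ∃ b : B, p a b ≠ 0)
    (hNdgB : ∀ b : B, ∃ a : A, p a b ≠ 0) :
    ∃ e : B ≃* (A →* ℂˣ),
      ∀ (b : B) (a : A), ((e b a : ℂˣ) : ℂ) = (Fintype.card A : ℂ) * p a b := by
  have hp : IsNondegCoalgebraHom p := ⟨hCounit, hComul, hNdgB⟩
  have hp' : IsNondegCoalgebraHom (flip p) := ⟨hUnit, fun x b c => hMul b c x, hNdgA⟩
  have hcard : Fintype.card A = Fintype.card B := le_antisymm hp'.card_le hp.card_le
  obtain ⟨E, hE⟩ := hp.exists_equiv hcard.le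
  obtain ⟨D, hD⟩ := hp'.exists_equiv hcard.ge
  have hED : ∀ b a, (E b a : ℂ) = D a b := fun b a => by rw [hE, hD, hcard, flip]
  refine ⟨MulEquiv.mk' E fun b c => ?_, hE⟩
  ext a
  simp only [hED, map_mul, MonoidHom.mul_apply, Units.val_mul]
end

section
/- Let G and H be groups, ω a normalized 3-cocycle on G with comultiplicative phase γ, and u : H → G a group homomorphism. Define η : H × H × H → ℂ by η(m,n,k) = ω(u(m),u(n),u(k)) (a normalized 3-cocycle on H), and let γ′ be the comultiplicative phase of η. Fix x ∈ G and w ∈ H and define κ(m,n) = γ_x(u(m),u(n)) / γ′_w(m,n) and ξ(m,n,k) = η(w⁻¹mw, w⁻¹nw, w⁻¹kw) / ω(x⁻¹u(m)x, x⁻¹u(n)x, x⁻¹u(k)x). Then for all m, n, k ∈ H: κ(m,n)·κ(mn,k) = κ(n,k)·κ(m,nk)·ξ(m,n,k). -/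
def IsMulCocycle₃ {G M : Type*} [Group G] [Mul M] (ω : G → G → G → M) : Prop :=
  ∀ a b c d, ω a b c * ω a (b * c) d * ω b c d = ω (a * b) c d * ω a b (c * d)

namespace IsMulCocycle₃

variable {G H M : Type*} [Group G] [Group H]

theorem comp_monoidHom [Mul M] {ω : G → G → G → M} (hω : IsMulCocycle₃ ω) (u : H →* G) :
    IsMulCocycle₃ fun m n k => ω (u m) (u n) (u k) := fun a b c d => by
  simpa only [map_mul] using hω (u a) (u b) (u c) (u d)

theorem mul_left_eq [CommGroupWithZero M] {ω : G → G → G → M} (hω : IsMulCocycle₃ ω)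
    (hne : ∀ a b c, ω a b c ≠ 0) (a b c d : G) :
    ω (a * b) c d = ω a b c * ω a (b * c) d * ω b c d / ω a b (c * d) := by
  rw [hω, mul_div_cancel_right₀ _ (hne _ _ _)]

theorem right_eq [CommGroupWithZero M] {ω : G → G → G → M} (hω : IsMulCocycle₃ ω)
    (hne : ∀ a b c, ω a b c ≠ 0) (a b c d : G) :
    ω b c d = ω (a * b) c d * ω a b (c * d) / (ω a b c * ω a (b * c) d) := by
  rw [← hω, mul_div_cancel_left₀ _ (mul_ne_zero (hne _ _ _) (hne _ _ _))]

theorem gammaPh_mul_gammaPh {ω : G → G → G → ℂ} (hω : IsMulCocycle₃ ω)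
    (hne : ∀ a b c, ω a b c ≠ 0) (x g h k : G) :
    gammaPh ω x g h * gammaPh ω x (g * h) k * ω (x⁻¹ * g * x) (x⁻¹ * h * x) (x⁻¹ * k * x)
      = gammaPh ω x h k * gammaPh ω x g (h * k) * ω g h k := by
  have conj_mul (a b : G) : (x⁻¹ * a * x) * (x⁻¹ * b * x) = x⁻¹ * (a * b) * x := by group
  have mul_conj (a : G) : x * (x⁻¹ * a * x) = a * x := by group
  have e₁ := hω.mul_left_eq hne g h k x
  have e₂ := hω.mul_left_eq hne g h x (x⁻¹ * k * x)
  have e₃ := hω.mul_left_eq hne g x (x⁻¹ * h * x) (x⁻¹ * k * x)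
  have e₄ := hω.right_eq hne x (x⁻¹ * g * x) (x⁻¹ * h * x) (x⁻¹ * k * x)
  simp only [conj_mul, mul_conj] at e₂ e₃ e₄
  simp only [gammaPh, e₁, e₂, e₄, e₃]
  field_simp [hne]

end IsMulCocycle₃

theorem gammaPh_ne_zero {G : Type*} [Group G] {ω : G → G → G → ℂ} (hne : ∀ a b c, ω a b c ≠ 0)
    (x g h : G) : gammaPh ω x g h ≠ 0 :=
  div_ne_zero (mul_ne_zero (hne _ _ _) (hne _ _ _)) (hne _ _ _)

theorem kappa_two_cocycle_up_to_xi_general {G H : Type*} [Group G] [Group H]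
    (ω : G → G → G → ℂ)
    (habs : ∀ a b c : G, ‖ω a b c‖ = 1)
    (hcoc : ∀ a b c d : G,
      ω a b c * ω a (b * c) d * ω b c d = ω (a * b) c d * ω a b (c * d))
    (u : H →* G)
    (η : H → H → H → ℂ)
    (hη : ∀ m n k : H, η m n k = ω (u m) (u n) (u k))
    (x : G) (w : H)
    (κ : H → H → ℂ)
    (hκ : ∀ m n : H, κ m n = gammaPh ω x (u m) (u n) / gammaPh η w m n)
    (ξ : H → H → H → ℂ)
    (hξ : ∀ m n k : H,
      ξ m n k = η (w⁻¹ * m * w) (w⁻¹ * n * w) (w⁻¹ * k * w)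
        / ω (x⁻¹ * u m * x) (x⁻¹ * u n * x) (x⁻¹ * u k * x)) :
    ∀ m n k : H, κ m n * κ (m * n) k = κ n k * κ m (n * k) * ξ m n k := by
  intro m n k
  have hne (a b c : G) : ω a b c ≠ 0 := norm_ne_zero_iff.mp (by simp [habs])
  have hneη (a b c : H) : η a b c ≠ 0 := by rw [hη]; exact hne _ _ _
  have hcocη : IsMulCocycle₃ η := funext₃ hη ▸ IsMulCocycle₃.comp_monoidHom hcoc u
  have hG := IsMulCocycle₃.gammaPh_mul_gammaPh hcoc hne x (u m) (u n) (u k)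
  have hH := hcocη.gammaPh_mul_gammaPh hneη w m n k
  rw [hη m n k] at hH
  have hγη := gammaPh_ne_zero hneη w
  rw [hκ, hκ, hκ, hκ, hξ, map_mul, map_mul, div_mul_div_comm, div_mul_div_comm,
    div_mul_div_comm, div_eq_div_iff (mul_ne_zero (hγη _ _) (hγη _ _))
      (mul_ne_zero (mul_ne_zero (hγη _ _) (hγη _ _)) (hne _ _ _))]
  linear_combination gammaPh η w n k * gammaPh η w m (n * k) * hG
    - gammaPh ω x (u n) (u k) * gammaPh ω x (u m) (u n * u k) * hH

/-- Let `ω` be a normalized 3-cocycle on `G`, `u : H → G` a group homomorphism, and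
`η(m,n,k) = ω(u(m),u(n),u(k))` the pulled-back 3-cocycle on `H` with comultiplicative
phase `γ′`.  For fixed `x ∈ G`, `w ∈ H`, set `κ(m,n) = γ_x(u(m),u(n))/γ′_w(m,n)` and
`ξ(m,n,k) = η(w⁻¹mw, w⁻¹nw, w⁻¹kw) / ω(x⁻¹u(m)x, x⁻¹u(n)x, x⁻¹u(k)x)`.  Then
`κ(m,n)·κ(mn,k) = κ(n,k)·κ(m,nk)·ξ(m,n,k)` for all `m, n, k ∈ H`. -/
theorem kappa_two_cocycle_up_to_xi {G H : Type*} [Group G] [Group H]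
    (ω : G → G → G → ℂ)
    (habs : ∀ a b c : G, ‖ω a b c‖ = 1)
    (hcoc : ∀ a b c d : G,
      ω a b c * ω a (b * c) d * ω b c d = ω (a * b) c d * ω a b (c * d))
    (hnorm : ∀ g h : G, ω g 1 h = 1)
    (u : H →* G)
    (η : H → H → H → ℂ)
    (hη : ∀ m n k : H, η m n k = ω (u m) (u n) (u k))
    (x : G) (w : H)
    (κ : H → H → ℂ)
    (hκ : ∀ m n : H, κ m n = gammaPh ω x (u m) (u n) / gammaPh η w m n)
    (ξ : H → H → H → ℂ)
    (hξ : ∀ m n k : H,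
      ξ m n k = η (w⁻¹ * m * w) (w⁻¹ * n * w) (w⁻¹ * k * w)
        / ω (x⁻¹ * u m * x) (x⁻¹ * u n * x) (x⁻¹ * u k * x)) :
    ∀ m n k : H, κ m n * κ (m * n) k = κ n k * κ m (n * k) * ξ m n k :=
  kappa_two_cocycle_up_to_xi_general ω habs hcoc u η hη x w κ hκ ξ hξ
end
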